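/- Let β be a lifted, τ(x)-global, γ-unital partial action of a finite connected groupoid G on a ring A = ⊕_{y∈G₀}B_y. There exists an element a in the center of A with t_y(a) = 1_y for all objects y (where t_y(a) = Σ_{g : t(g)=y} β_g(a·1_{g⁻¹})) if and only if there exists an element b in the center of B_x with t_{β_{(x)}}(b) = 1_x (where t_{β_{(x)}}(b) = Σ_{h∈G(x)} β_h(b·1_{h⁻¹})). -/
import Mathlib


open CategoryTheory

universe u v w

/-- `S` is a (two-sided) ideal of the subset `R` of the ring `A`. -/
def IsIdealIn {A : Type v} [Ring A] (S R : Set A) : Prop :=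
  S ⊆ R ∧ (0 : A) ∈ S ∧ (∀ a ∈ S, ∀ b ∈ S, a + b ∈ S) ∧ (∀ a ∈ S, -a ∈ S) ∧
    ∀ r ∈ R, ∀ s ∈ S, r * s ∈ S ∧ s * r ∈ S

/-- A partial action of a groupoid `G` on a ring `A`: for each morphism `g : a ⟶ b`,
an ideal `D g` of `D (𝟙 b)` (which is an ideal of `A`), and a ring isomorphism
`f g : D (inv g) → D g` (encoded as a total function of `A` which is a bijection of
the relevant subsets), such that `f (𝟙 y)` is the identity of `D (𝟙 y)` and
`f (h ≫ g)` extends `f g ∘ f h`. -/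
structure PartialGroupoidAction (G : Type u) (A : Type v) [Groupoid G] [Ring A] where
  D : ∀ {a b : G}, (a ⟶ b) → Set A
  f : ∀ {a b : G}, (a ⟶ b) → A → A
  ideal_obj : ∀ y : G, IsIdealIn (D (𝟙 y)) Set.univ
  ideal_mor : ∀ {a b : G} (g : a ⟶ b), IsIdealIn (D g) (D (𝟙 b))
  bij : ∀ {a b : G} (g : a ⟶ b), Set.BijOn (f g) (D (Groupoid.inv g)) (D g)
  map_add : ∀ {a b : G} (g : a ⟶ b), ∀ u ∈ D (Groupoid.inv g), ∀ v ∈ D (Groupoid.inv g),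
    f g (u + v) = f g u + f g v
  map_mul : ∀ {a b : G} (g : a ⟶ b), ∀ u ∈ D (Groupoid.inv g), ∀ v ∈ D (Groupoid.inv g),
    f g (u * v) = f g u * f g v
  id_act : ∀ y : G, ∀ u ∈ D (𝟙 y), f (𝟙 y) u = u
  comp : ∀ {a b c : G} (h : a ⟶ b) (g : b ⟶ c), ∀ u ∈ D (Groupoid.inv h),
    f h u ∈ D (Groupoid.inv g) →
      u ∈ D (Groupoid.inv (h ≫ g)) ∧ f (h ≫ g) u = f g (f h u)

/-- The setting of Sections 6–8 of the paper: a finite connected groupoid `G` with a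
fixed object `x` and transversal `τ`, and a partial action `act` of `G` on `A` which is
unital (`D g = A·(e g)` for central idempotents `e g`), `τ(x)`-global, lifted from a
datum (i.e. `f g = γ_{τ_{t g}} ∘ γ_{g_x} ∘ γ_{τ_{s g}}⁻¹`), and `A = ⊕_{y} D (𝟙 y)`. -/
structure LiftedSetting (G : Type u) (A : Type v) [Groupoid G] [Ring A] [Fintype G]
    [∀ a b : G, Fintype (a ⟶ b)] (x : G) (τ : ∀ y : G, x ⟶ y) where
  act : PartialGroupoidAction G A
  e : ∀ {a b : G}, (a ⟶ b) → A
  e_central : ∀ {a b : G} (g : a ⟶ b) (r : A), e g * r = r * e g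
  e_idem : ∀ {a b : G} (g : a ⟶ b), e g * e g = e g
  D_eq : ∀ {a b : G} (g : a ⟶ b), act.D g = {u : A | u * e g = u}
  tau_id : τ x = 𝟙 x
  tau_global_inv : ∀ y : G, act.D (Groupoid.inv (τ y)) = act.D (𝟙 x)
  tau_global : ∀ y : G, act.D (τ y) = act.D (𝟙 y)
  lifted : ∀ {a b : G} (g : a ⟶ b), ∀ u ∈ act.D (Groupoid.inv g),
    act.f g u =
      act.f (τ b) (act.f (τ a ≫ g ≫ Groupoid.inv (τ b)) (act.f (Groupoid.inv (τ a)) u))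
  orth : ∀ y z : G, y ≠ z → e (𝟙 y) * e (𝟙 z) = 0
  sum_id_one : (∑ y : G, e (𝟙 y)) = 1

theorem ginv_inv {G : Type*} [Groupoid G] {a b : G} (g : a ⟶ b) :
    Groupoid.inv (Groupoid.inv g) = g := by
  simp [Groupoid.inv_eq_inv]

theorem ginv_id {G : Type*} [Groupoid G] (y : G) : Groupoid.inv (𝟙 y) = 𝟙 y := by
  simp [Groupoid.inv_eq_inv]

theorem ginv_comp_eq {G : Type*} [Groupoid G] {a b c : G} {h : a ⟶ b} {g : b ⟶ c}
    {k : a ⟶ c} (hk : h ≫ g = k) :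
    Groupoid.inv g ≫ Groupoid.inv h = Groupoid.inv k := by
  subst hk; simp [Groupoid.inv_eq_inv]

def compRightEquiv {G : Type*} [Groupoid G] {x y z : G} (t : y ⟶ z) :
    (x ⟶ y) ≃ (x ⟶ z) where
  toFun k := k ≫ t
  invFun g := g ≫ Groupoid.inv t
  left_inv k := by simp [Category.assoc, Groupoid.comp_inv]
  right_inv g := by simp [Category.assoc, Groupoid.inv_comp]

def compLeftEquiv {G : Type*} [Groupoid G] {x y z : G} (t : z ⟶ x) :
    (x ⟶ y) ≃ (z ⟶ y) where
  toFun k := t ≫ k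
  invFun g := Groupoid.inv t ≫ g
  left_inv k := by
    show Groupoid.inv t ≫ t ≫ k = k
    rw [← Category.assoc, Groupoid.inv_comp, Category.id_comp]
  right_inv g := by
    show t ≫ Groupoid.inv t ≫ g = g
    rw [← Category.assoc, Groupoid.comp_inv, Category.id_comp]

namespace LiftedSetting

variable {G : Type*} {A : Type*} [Groupoid G] [Ring A] [Fintype G]
    [∀ a b : G, Fintype (a ⟶ b)] {x : G} {τ : ∀ y : G, x ⟶ y}
    (S : LiftedSetting G A x τ)

theorem mem_D_iff {a b : G} (g : a ⟶ b) (u : A) : u ∈ S.act.D g ↔ u * S.e g = u := by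
  rw [S.D_eq]; rfl

theorem e_mem {a b : G} (g : a ⟶ b) : S.e g ∈ S.act.D g :=
  (S.mem_D_iff g _).2 (S.e_idem g)

theorem D_sub_id {a b : G} (g : a ⟶ b) : S.act.D g ⊆ S.act.D (𝟙 b) :=
  (S.act.ideal_mor g).1

theorem mul_mem_D {a b : G} (g : a ⟶ b) (r u : A) (hu : u ∈ S.act.D g) :
    r * u ∈ S.act.D g := by
  rw [S.mem_D_iff] at hu ⊢
  rw [mul_assoc, hu]

theorem add_mem_D {a b : G} (g : a ⟶ b) {u v : A} (hu : u ∈ S.act.D g)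
    (hv : v ∈ S.act.D g) : u + v ∈ S.act.D g := by
  rw [S.mem_D_iff] at hu hv ⊢
  rw [add_mul, hu, hv]

theorem zero_mem_D {a b : G} (g : a ⟶ b) : (0 : A) ∈ S.act.D g := by
  rw [S.mem_D_iff, zero_mul]

theorem f_zero {a b : G} (g : a ⟶ b) : S.act.f g 0 = 0 := by
  have h := S.act.map_add g 0 (S.zero_mem_D _) 0 (S.zero_mem_D _)
  rw [add_zero] at h
  exact left_eq_add.mp h

theorem f_mem {a b : G} (g : a ⟶ b) {u : A} (hu : u ∈ S.act.D (Groupoid.inv g)) :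
    S.act.f g u ∈ S.act.D g := (S.act.bij g).1 hu

theorem f_sum {a b : G} (g : a ⟶ b) {ι : Type*} (s : Finset ι) (u : ι → A)
    (hu : ∀ i ∈ s, u i ∈ S.act.D (Groupoid.inv g)) :
    S.act.f g (∑ i ∈ s, u i) = ∑ i ∈ s, S.act.f g (u i) := by
  classical
  induction s using Finset.induction_on with
  | empty => simp [S.f_zero]
  | @insert i s' hx ih =>
    rw [Finset.sum_insert hx, Finset.sum_insert hx,
      S.act.map_add g _ (hu i (Finset.mem_insert_self _ _)) _
        (Finset.sum_induction _ _ (fun _ _ => S.add_mem_D _) (S.zero_mem_D _)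
          (fun j hj => hu j (Finset.mem_insert_of_mem hj))),
      ih (fun j hj => hu j (Finset.mem_insert_of_mem hj))]

/-- A cleaned up version of the composition axiom. -/
theorem f_comp {a b c : G} (h : a ⟶ b) (g : b ⟶ c) (k : a ⟶ c) (hk : h ≫ g = k)
    {u : A} (hu : u ∈ S.act.D (Groupoid.inv h)) (hfu : S.act.f h u ∈ S.act.D (Groupoid.inv g)) :
    u ∈ S.act.D (Groupoid.inv k) ∧ S.act.f k u = S.act.f g (S.act.f h u) := by
  have := S.act.comp h g u hu hfu
  rwa [hk] at this

theorem tau_cancel_left (y : G) {u : A} (hu : u ∈ S.act.D (𝟙 x)) :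
    S.act.f (Groupoid.inv (τ y)) (S.act.f (τ y) u) = u := by
  have h1 : u ∈ S.act.D (Groupoid.inv (τ y)) := by rw [S.tau_global_inv]; exact hu
  have h2 : S.act.f (τ y) u ∈ S.act.D (Groupoid.inv (Groupoid.inv (τ y))) := by
    rw [ginv_inv]; exact S.f_mem _ h1
  have := S.f_comp (τ y) (Groupoid.inv (τ y)) (𝟙 x) (Groupoid.comp_inv _) h1 h2
  rw [← this.2]
  exact S.act.id_act x u hu

theorem tau_cancel_right (y : G) {v : A} (hv : v ∈ S.act.D (𝟙 y)) :
    S.act.f (τ y) (S.act.f (Groupoid.inv (τ y)) v) = v := by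
  have h1 : v ∈ S.act.D (Groupoid.inv (Groupoid.inv (τ y))) := by
    rw [ginv_inv, S.tau_global]; exact hv
  have h2 : S.act.f (Groupoid.inv (τ y)) v ∈ S.act.D (Groupoid.inv (τ y)) :=
    S.f_mem _ h1
  have := S.f_comp (Groupoid.inv (τ y)) (τ y) (𝟙 y) (Groupoid.inv_comp _) h1 h2
  rw [← this.2]
  exact S.act.id_act y v hv

/-- A right identity of `D g` must equal `e g`. -/
theorem eq_e {a b : G} (g : a ⟶ b) {w : A} (hw : w ∈ S.act.D g)
    (hid : ∀ v ∈ S.act.D g, v * w = v) : w = S.e g := by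
  have h1 : S.e g * w = S.e g := hid _ (S.e_mem g)
  have h2 : w * S.e g = w := (S.mem_D_iff g w).1 hw
  rw [← h2, ← S.e_central, h1]

theorem e_eq_of_D_eq {a b a' b' : G} (g : a ⟶ b) (g' : a' ⟶ b')
    (h : S.act.D g = S.act.D g') : S.e g = S.e g' := by
  refine S.eq_e g' (h ▸ S.e_mem g) fun v hv => ?_
  rw [← h] at hv
  exact (S.mem_D_iff g v).1 hv

theorem f_tau_e (y : G) : S.act.f (τ y) (S.e (𝟙 x)) = S.e (𝟙 y) := by
  have hmem : S.act.f (τ y) (S.e (𝟙 x)) ∈ S.act.D (𝟙 y) := by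
    rw [← S.tau_global]
    exact S.f_mem _ (by rw [S.tau_global_inv]; exact S.e_mem _)
  refine S.eq_e (𝟙 y) hmem fun v hv => ?_
  have hu : S.act.f (Groupoid.inv (τ y)) v ∈ S.act.D (𝟙 x) := by
    rw [← S.tau_global_inv y]
    exact S.f_mem _ (by rw [ginv_inv, S.tau_global]; exact hv)
  have hrec := S.tau_cancel_right y hv
  have hd : ∀ w ∈ S.act.D (𝟙 x), w ∈ S.act.D (Groupoid.inv (τ y)) := fun w hw => by
    rwa [S.tau_global_inv]
  calc v * S.act.f (τ y) (S.e (𝟙 x))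
      = S.act.f (τ y) (S.act.f (Groupoid.inv (τ y)) v) * S.act.f (τ y) (S.e (𝟙 x)) := by
        rw [hrec]
    _ = S.act.f (τ y) (S.act.f (Groupoid.inv (τ y)) v * S.e (𝟙 x)) := by
        rw [S.act.map_mul (τ y) _ (hd _ hu) _ (hd _ (S.e_mem _))]
    _ = v := by
        rw [(S.mem_D_iff (𝟙 x) _).1 hu, hrec]

/-- Lemma A: transport along `τ` on the target side. For `k : x ⟶ x` and
`m = k ≫ τ y : x ⟶ y`, the domains `D (inv m)` and `D (inv k)` agree and
`f m = f (τ y) ∘ f k` there. -/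
theorem lemA_D (k : x ⟶ x) (y : G) (m : x ⟶ y) (hm : k ≫ τ y = m) :
    S.act.D (Groupoid.inv m) = S.act.D (Groupoid.inv k) := by
  apply Set.eq_of_subset_of_subset
  · intro u hu
    have hfu : S.act.f m u ∈ S.act.D (Groupoid.inv (Groupoid.inv (τ y))) := by
      rw [ginv_inv, S.tau_global]
      exact S.D_sub_id m (S.f_mem m hu)
    have hk' : m ≫ Groupoid.inv (τ y) = k := by
      rw [← hm, Category.assoc, Groupoid.comp_inv, Category.comp_id]
    exact (S.f_comp m (Groupoid.inv (τ y)) k hk' hu hfu).1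
  · intro u hu
    have hfu : S.act.f k u ∈ S.act.D (Groupoid.inv (τ y)) := by
      rw [S.tau_global_inv]
      exact S.D_sub_id k (S.f_mem k hu)
    exact (S.f_comp k (τ y) m hm hu hfu).1

theorem lemA_e (k : x ⟶ x) (y : G) (m : x ⟶ y) (hm : k ≫ τ y = m) :
    S.e (Groupoid.inv m) = S.e (Groupoid.inv k) :=
  S.e_eq_of_D_eq _ _ (S.lemA_D k y m hm)

theorem lemA_f (k : x ⟶ x) (y : G) (m : x ⟶ y) (hm : k ≫ τ y = m) {u : A}
    (hu : u ∈ S.act.D (Groupoid.inv k)) :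
    S.act.f m u = S.act.f (τ y) (S.act.f k u) := by
  have hfu : S.act.f k u ∈ S.act.D (Groupoid.inv (τ y)) := by
    rw [S.tau_global_inv]
    exact S.D_sub_id k (S.f_mem k hu)
  exact (S.f_comp k (τ y) m hm hu hfu).2

/-- Lemma B: transport along `τ` on the source side. For `k : x ⟶ x` and
`m = inv (τ z) ≫ k : z ⟶ x`. -/
theorem lemB_mem (k : x ⟶ x) (z : G) (m : z ⟶ x) (hm : Groupoid.inv (τ z) ≫ k = m)
    {u : A} (hu : u ∈ S.act.D (Groupoid.inv k)) :
    S.act.f (τ z) u ∈ S.act.D (Groupoid.inv m) := by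
  have hux : u ∈ S.act.D (𝟙 x) := S.D_sub_id _ hu
  have h1 : S.act.f (τ z) u ∈ S.act.D (Groupoid.inv (Groupoid.inv (τ z))) := by
    rw [ginv_inv]
    exact S.f_mem _ (by rw [S.tau_global_inv]; exact hux)
  have h2 : S.act.f (Groupoid.inv (τ z)) (S.act.f (τ z) u) ∈ S.act.D (Groupoid.inv k) := by
    rw [S.tau_cancel_left z hux]; exact hu
  exact (S.f_comp (Groupoid.inv (τ z)) k m hm h1 h2).1

theorem lemB_f (k : x ⟶ x) (z : G) (m : z ⟶ x) (hm : Groupoid.inv (τ z) ≫ k = m)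
    {u : A} (hu : u ∈ S.act.D (Groupoid.inv k)) :
    S.act.f m (S.act.f (τ z) u) = S.act.f k u := by
  have hux : u ∈ S.act.D (𝟙 x) := S.D_sub_id _ hu
  have h1 : S.act.f (τ z) u ∈ S.act.D (Groupoid.inv (Groupoid.inv (τ z))) := by
    rw [ginv_inv]
    exact S.f_mem _ (by rw [S.tau_global_inv]; exact hux)
  have h2 : S.act.f (Groupoid.inv (τ z)) (S.act.f (τ z) u) ∈ S.act.D (Groupoid.inv k) := by
    rw [S.tau_cancel_left z hux]; exact hu
  have := (S.f_comp (Groupoid.inv (τ z)) k m hm h1 h2).2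
  rw [this, S.tau_cancel_left z hux]

/-- Every element of `D (inv m)` (for `m = inv (τ z) ≫ k`) pulls back to `D (inv k)`. -/
theorem lemB_mem_inv (k : x ⟶ x) (z : G) (m : z ⟶ x) (hm : Groupoid.inv (τ z) ≫ k = m)
    {v : A} (hv : v ∈ S.act.D (Groupoid.inv m)) :
    S.act.f (Groupoid.inv (τ z)) v ∈ S.act.D (Groupoid.inv k) ∧
      S.act.f (τ z) (S.act.f (Groupoid.inv (τ z)) v) = v := by
  -- obtain a preimage of v under f (inv m)
  obtain ⟨u', hu', hfu'⟩ := (S.act.bij (Groupoid.inv m)).2.2 hv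
  rw [ginv_inv] at hu'
  have hk2 : τ z ≫ m = k := by
    rw [← hm, ← Category.assoc, Groupoid.comp_inv, Category.id_comp]
  have heq : Groupoid.inv m ≫ Groupoid.inv (τ z) = Groupoid.inv k :=
    ginv_comp_eq hk2
  have h1 : u' ∈ S.act.D (Groupoid.inv (Groupoid.inv m)) := by rw [ginv_inv]; exact hu'
  have h2 : S.act.f (Groupoid.inv m) u' ∈ S.act.D (Groupoid.inv (Groupoid.inv (τ z))) := by
    rw [ginv_inv, S.tau_global]
    exact S.D_sub_id _ (S.f_mem _ h1)
  have hc := S.f_comp (Groupoid.inv m) (Groupoid.inv (τ z)) (Groupoid.inv k) heq h1 h2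
  constructor
  · rw [← hfu', ← hc.2]
    exact S.f_mem _ hc.1
  · exact S.tau_cancel_right z (S.D_sub_id _ hv)

theorem lemB_e (k : x ⟶ x) (z : G) (m : z ⟶ x) (hm : Groupoid.inv (τ z) ≫ k = m) :
    S.act.f (τ z) (S.e (Groupoid.inv k)) = S.e (Groupoid.inv m) := by
  refine S.eq_e _ (S.lemB_mem k z m hm (S.e_mem _)) fun v hv => ?_
  obtain ⟨hmem, hval⟩ := S.lemB_mem_inv k z m hm hv
  set u := S.act.f (Groupoid.inv (τ z)) v with hudef
  have hd : ∀ w ∈ S.act.D (𝟙 x), w ∈ S.act.D (Groupoid.inv (τ z)) :=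
    fun w hw => by rw [S.tau_global_inv]; exact hw
  calc v * S.act.f (τ z) (S.e (Groupoid.inv k))
      = S.act.f (τ z) u * S.act.f (τ z) (S.e (Groupoid.inv k)) := by rw [hval]
    _ = S.act.f (τ z) (u * S.e (Groupoid.inv k)) := by
        rw [S.act.map_mul (τ z) _ (hd _ (S.D_sub_id _ hmem)) _ (hd _ (S.D_sub_id _ (S.e_mem _)))]
    _ = v := by rw [(S.mem_D_iff (Groupoid.inv k) u).1 hmem, hval]

theorem mul_e_mem {a b : G} (g : a ⟶ b) (r : A) : r * S.e g ∈ S.act.D g := by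
  rw [S.mem_D_iff, mul_assoc, S.e_idem]

theorem sum_mem_D {a b : G} (g : a ⟶ b) {ι : Type*} (s : Finset ι) (u : ι → A)
    (hu : ∀ i ∈ s, u i ∈ S.act.D g) : (∑ i ∈ s, u i) ∈ S.act.D g :=
  Finset.sum_induction _ _ (fun _ _ => S.add_mem_D _) (S.zero_mem_D _) hu

/-- The local condition at `x` implies the global condition. -/
theorem local_to_global (b : A) (hbD : b ∈ S.act.D (𝟙 x))
    (hbC : ∀ r ∈ S.act.D (𝟙 x), b * r = r * b)
    (hbt : (∑ h : x ⟶ x, S.act.f h (b * S.e (Groupoid.inv h))) = S.e (𝟙 x)) :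
    (∀ r : A, b * r = r * b) ∧
      ∀ y : G, (∑ z : G, ∑ g : z ⟶ y, S.act.f g (b * S.e (Groupoid.inv g))) =
        S.e (𝟙 y) := by
  have hbx : b * S.e (𝟙 x) = b := (S.mem_D_iff _ _).1 hbD
  constructor
  · intro r
    have key : ∀ y : G, b * (r * S.e (𝟙 y)) = (r * S.e (𝟙 y)) * b := by
      intro y
      by_cases hy : y = x
      · subst hy
        exact hbC _ (S.mul_e_mem _ r)
      · have h1 : b * (r * S.e (𝟙 y)) = 0 := by
          calc b * (r * S.e (𝟙 y)) = (b * S.e (𝟙 x)) * (r * S.e (𝟙 y)) := by rw [hbx]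
          _ = b * r * (S.e (𝟙 x) * S.e (𝟙 y)) := by
              rw [mul_assoc, ← mul_assoc (S.e (𝟙 x)), S.e_central, mul_assoc, ← mul_assoc,
                ← mul_assoc]
          _ = 0 := by rw [S.orth x y (fun h => hy h.symm), mul_zero]
        have h2 : (r * S.e (𝟙 y)) * b = 0 := by
          calc (r * S.e (𝟙 y)) * b = (r * S.e (𝟙 y)) * (b * S.e (𝟙 x)) := by rw [hbx]
          _ = r * b * (S.e (𝟙 y) * S.e (𝟙 x)) := by
              rw [mul_assoc, ← mul_assoc (S.e (𝟙 y)), S.e_central, mul_assoc, ← mul_assoc,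
                ← mul_assoc]
          _ = 0 := by rw [S.orth y x hy, mul_zero]
        rw [h1, h2]
    calc b * r = b * (r * ∑ y : G, S.e (𝟙 y)) := by rw [S.sum_id_one, mul_one]
    _ = ∑ y : G, b * (r * S.e (𝟙 y)) := by rw [Finset.mul_sum, Finset.mul_sum]
    _ = ∑ y : G, (r * S.e (𝟙 y)) * b := by exact Finset.sum_congr rfl fun y _ => key y
    _ = (r * ∑ y : G, S.e (𝟙 y)) * b := by rw [Finset.mul_sum, Finset.sum_mul]
    _ = r * b := by rw [S.sum_id_one, mul_one]
  · intro y
    have hzero : ∀ z : G, z ≠ x → ∀ g : z ⟶ y,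
        S.act.f g (b * S.e (Groupoid.inv g)) = 0 := by
      intro z hz g
      have he : S.e (Groupoid.inv g) * S.e (𝟙 z) = S.e (Groupoid.inv g) :=
        (S.mem_D_iff _ _).1 (S.D_sub_id _ (S.e_mem (Groupoid.inv g)))
      have : b * S.e (Groupoid.inv g) = 0 := by
        calc b * S.e (Groupoid.inv g)
            = (b * S.e (𝟙 x)) * (S.e (Groupoid.inv g) * S.e (𝟙 z)) := by rw [hbx, he]
        _ = b * S.e (Groupoid.inv g) * (S.e (𝟙 x) * S.e (𝟙 z)) := by
            rw [mul_assoc, ← mul_assoc (S.e (𝟙 x)), S.e_central, mul_assoc, ← mul_assoc,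
              ← mul_assoc]
        _ = 0 := by rw [S.orth x z (fun h => hz h.symm), mul_zero]
      rw [this, S.f_zero]
    rw [Fintype.sum_eq_single x (fun z hz => Finset.sum_eq_zero fun g _ => hzero z hz g)]
    -- now reindex the sum over x ⟶ y by x ⟶ x
    rw [← Fintype.sum_equiv (compRightEquiv (τ y))
        (fun k => S.act.f (τ y) (S.act.f k (b * S.e (Groupoid.inv k))))
        (fun g => S.act.f g (b * S.e (Groupoid.inv g)))
        (fun k => by
          show S.act.f (τ y) (S.act.f k (b * S.e (Groupoid.inv k)))
            = S.act.f (k ≫ τ y) (b * S.e (Groupoid.inv (k ≫ τ y)))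
          rw [S.lemA_e k y (k ≫ τ y) rfl,
            S.lemA_f k y (k ≫ τ y) rfl (S.mul_e_mem _ b)])]
    rw [← S.f_sum (τ y) Finset.univ _
        (fun k _ => by
          rw [S.tau_global_inv]
          exact S.D_sub_id k (S.f_mem k (S.mul_e_mem _ b))),
      hbt, S.f_tau_e]

/-- The global condition implies the local condition at `x`. -/
theorem global_to_local (a : A) (haC : ∀ r : A, a * r = r * a)
    (hat : ∀ y : G, (∑ z : G, ∑ g : z ⟶ y, S.act.f g (a * S.e (Groupoid.inv g))) =
      S.e (𝟙 y)) :
    ∃ b ∈ S.act.D (𝟙 x), (∀ r ∈ S.act.D (𝟙 x), b * r = r * b) ∧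
      (∑ h : x ⟶ x, S.act.f h (b * S.e (Groupoid.inv h))) = S.e (𝟙 x) := by
  set c : G → A := fun z => S.act.f (Groupoid.inv (τ z)) (a * S.e (𝟙 z)) with hc
  have haez : ∀ z : G, a * S.e (𝟙 z) ∈ S.act.D (Groupoid.inv (Groupoid.inv (τ z))) := by
    intro z
    rw [ginv_inv, S.tau_global]
    exact S.mul_e_mem _ a
  have hcz : ∀ z : G, c z ∈ S.act.D (𝟙 x) := by
    intro z
    rw [← S.tau_global_inv z]
    exact S.f_mem _ (haez z)
  refine ⟨∑ z : G, c z, S.sum_mem_D _ _ _ (fun z _ => hcz z), ?_, ?_⟩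
  · intro r hr
    rw [Finset.sum_mul, Finset.mul_sum]
    refine Finset.sum_congr rfl fun z _ => ?_
    have hr' : S.act.f (τ z) r ∈ S.act.D (Groupoid.inv (Groupoid.inv (τ z))) := by
      rw [ginv_inv]
      exact S.f_mem _ (by rw [S.tau_global_inv]; exact hr)
    have hrr : S.act.f (Groupoid.inv (τ z)) (S.act.f (τ z) r) = r :=
      S.tau_cancel_left z hr
    have comm : ∀ u : A, (a * S.e (𝟙 z)) * u = u * (a * S.e (𝟙 z)) := by
      intro u
      rw [mul_assoc, S.e_central, ← mul_assoc, haC, mul_assoc]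
    calc c z * r
        = S.act.f (Groupoid.inv (τ z)) (a * S.e (𝟙 z)) *
            S.act.f (Groupoid.inv (τ z)) (S.act.f (τ z) r) := by rw [hrr]
      _ = S.act.f (Groupoid.inv (τ z)) ((a * S.e (𝟙 z)) * S.act.f (τ z) r) := by
          rw [S.act.map_mul (Groupoid.inv (τ z)) _ (haez z) _ hr']
      _ = S.act.f (Groupoid.inv (τ z)) (S.act.f (τ z) r * (a * S.e (𝟙 z))) := by
          rw [comm]
      _ = r * c z := by
          rw [S.act.map_mul (Groupoid.inv (τ z)) _ hr' _ (haez z), hrr]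
  · have step1 : ∀ h : x ⟶ x,
        S.act.f h ((∑ z : G, c z) * S.e (Groupoid.inv h)) =
          ∑ z : G, S.act.f h (c z * S.e (Groupoid.inv h)) := by
      intro h
      rw [Finset.sum_mul]
      exact S.f_sum h Finset.univ _ (fun z _ => S.mul_e_mem _ (c z))
    calc (∑ h : x ⟶ x, S.act.f h ((∑ z : G, c z) * S.e (Groupoid.inv h)))
        = ∑ h : x ⟶ x, ∑ z : G, S.act.f h (c z * S.e (Groupoid.inv h)) :=
          Finset.sum_congr rfl fun h _ => step1 h
      _ = ∑ z : G, ∑ h : x ⟶ x, S.act.f h (c z * S.e (Groupoid.inv h)) :=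
          Finset.sum_comm
      _ = ∑ z : G, ∑ g : z ⟶ x, S.act.f g (a * S.e (Groupoid.inv g)) := by
          refine Finset.sum_congr rfl fun z _ => ?_
          refine Fintype.sum_equiv (compLeftEquiv (Groupoid.inv (τ z))) _ _ fun k => ?_
          show S.act.f k (c z * S.e (Groupoid.inv k))
            = S.act.f (Groupoid.inv (τ z) ≫ k)
                (a * S.e (Groupoid.inv (Groupoid.inv (τ z) ≫ k)))
          set m : z ⟶ x := Groupoid.inv (τ z) ≫ k with hm
          have hek : S.act.f (Groupoid.inv (τ z)) (S.e (Groupoid.inv m)) =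
              S.e (Groupoid.inv k) := by
            rw [← S.lemB_e k z m rfl,
              S.tau_cancel_left z (S.D_sub_id _ (S.e_mem (Groupoid.inv k)))]
          have hm_mem : S.e (Groupoid.inv m) ∈
              S.act.D (Groupoid.inv (Groupoid.inv (τ z))) := by
            rw [ginv_inv, S.tau_global]
            exact S.D_sub_id _ (S.e_mem (Groupoid.inv m))
          have key : c z * S.e (Groupoid.inv k) =
              S.act.f (Groupoid.inv (τ z)) (a * S.e (Groupoid.inv m)) := by
            calc c z * S.e (Groupoid.inv k)
                = S.act.f (Groupoid.inv (τ z)) (a * S.e (𝟙 z)) *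
                    S.act.f (Groupoid.inv (τ z)) (S.e (Groupoid.inv m)) := by rw [hek]
              _ = S.act.f (Groupoid.inv (τ z))
                    ((a * S.e (𝟙 z)) * S.e (Groupoid.inv m)) := by
                  rw [S.act.map_mul (Groupoid.inv (τ z)) _ (haez z) _ hm_mem]
              _ = S.act.f (Groupoid.inv (τ z)) (a * S.e (Groupoid.inv m)) := by
                  rw [mul_assoc, S.e_central,
                    (S.mem_D_iff _ _).1 (S.D_sub_id _ (S.e_mem (Groupoid.inv m)))]
          rw [key]
          -- now use Lemma B
          have hv : a * S.e (Groupoid.inv m) ∈ S.act.D (Groupoid.inv m) :=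
            S.mul_e_mem _ a
          obtain ⟨hmem2, hval2⟩ := S.lemB_mem_inv k z m rfl hv
          have := S.lemB_f k z m rfl hmem2
          rw [hval2] at this
          rw [← this]
      _ = S.e (𝟙 x) := hat x

end LiftedSetting

/-- There is a central element `a` of `A` with `t_y (a) = 1_y` for all objects `y`
(where `t_y (a) = ∑_{t g = y} β_g (a · e (inv g))`) if and only if there is a central
element `b` of `B_x` with `t_{β_{(x)}} (b) = 1_x`.  (By the results cited in the paper,
each condition is equivalent to separability of the respective skew ring extension.) -/
theorem stmt19 {G : Type u} {A : Type v} [Groupoid G] [Ring A] [Fintype G]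
    [∀ a b : G, Fintype (a ⟶ b)] (x : G) (τ : ∀ y : G, x ⟶ y)
    (S : LiftedSetting G A x τ) :
    (∃ a : A, (∀ r : A, a * r = r * a) ∧
        ∀ y : G, (∑ z : G, ∑ g : z ⟶ y, S.act.f g (a * S.e (Groupoid.inv g))) =
          S.e (𝟙 y)) ↔
      (∃ b ∈ S.act.D (𝟙 x), (∀ r ∈ S.act.D (𝟙 x), b * r = r * b) ∧
        (∑ h : x ⟶ x, S.act.f h (b * S.e (Groupoid.inv h))) = S.e (𝟙 x)) := by
  constructor
  · rintro ⟨a, haC, hat⟩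
    exact S.global_to_local a haC hat
  · rintro ⟨b, hbD, hbC, hbt⟩
    obtain ⟨h1, h2⟩ := S.local_to_global b hbD hbC hbt
    exact ⟨b, h1, h2⟩
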